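/- arXiv:2203.03408 — 3 statements merged into one kernel-verified Lean document; each statement's English description precedes it below -/
import Mathlib

section
/- If (u_1,…,u_N) ∈ 𝒰, i.e. there exists an integer m₀ such that A^{m₀}u_j ∈ ℤ^d for every j = 1,…,N and the N cosets A^{m₀}u_j + Aℤ^d are pairwise distinct, then the iterated function system (T_1,…,T_N) defined by T_j x := A^{-1}x + u_j does not have exact overlaps. -/
open MeasureTheory Filter Topology ENNReal

noncomputable section

/-- `wordComp T j = T (j 0) ∘ T (j 1) ∘ ⋯ ∘ T (j (n-1))`. -/
def wordComp {E : Type*} {N : ℕ} (T : Fin N → E → E) :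
    ∀ {n : ℕ}, (Fin n → Fin N) → E → E
  | 0, _ => id
  | _ + 1, j => T (j 0) ∘ wordComp T (fun i => j i.succ)

/-- The iterated function system `(T 1, …, T N)` has exact overlaps. -/
def HasExactOverlaps {E : Type*} {N : ℕ} (T : Fin N → E → E) : Prop :=
  ∃ (n : ℕ) (j k : Fin n → Fin N), 1 ≤ n ∧ j ≠ k ∧ wordComp T j = wordComp T k

/-- The iterated function system `(T 1, …, T N)` satisfies the open set condition. -/
def SatisfiesOSC {E : Type*} [TopologicalSpace E] {N : ℕ} (T : Fin N → E → E) : Prop :=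
  ∃ U : Set E, U.Nonempty ∧ IsOpen U ∧ (∀ j, T j '' U ⊆ U) ∧
    ∀ j k, j ≠ k → T j '' U ∩ T k '' U = ∅

/-- `Λ = ⋃_{m ≥ 0} A^{-m} ℤ^d`, as a subset of Euclidean space. -/
def lam {d : ℕ} (A : Matrix (Fin d) (Fin d) ℝ) : Set (EuclideanSpace ℝ (Fin d)) :=
  {x | ∃ (m : ℕ) (v : Fin d → ℤ),
    x = Matrix.toEuclideanLin (A⁻¹ ^ m) ((WithLp.equiv 2 (Fin d → ℝ)).symm fun i => (v i : ℝ))}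

/-!
Composing the maps along a word `j` of length `n` gives `x ↦ A⁻ⁿ x + ∑ᵢ A⁻ⁱ u_{jᵢ}`, so an exact
overlap is an equality of two such translation parts. Applying `A^(n-1) A^m₀` turns each into a
radix expansion `∑ᵢ A^(n-1-i) z_{jᵢ}` in `ℤ^d` with digits `z_j = A^m₀ u_j`. Since the digits are
pairwise incongruent modulo `A ℤ^d`, the last digit is determined modulo `A ℤ^d`; removing it and
cancelling the injective `A` leaves a shorter expansion, so by induction the two words agree.
-/

open Function

section Digits

variable {M F ι : Type*} [FunLike F M M]

theorem wordComp_apply_of_eq_add [AddCommMonoid M] [AddMonoidHomClass F M M] {N : ℕ}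
    (T : Fin N → M → M) (a : F) (u : Fin N → M) (hT : ∀ j x, T j x = a x + u j) :
    ∀ {n : ℕ} (j : Fin n → Fin N) (x : M),
      wordComp T j x = a^[n] x + ∑ i : Fin n, a^[i] (u (j i))
  | 0, _, x => by simp [wordComp]
  | n + 1, j, x => by
    rw [wordComp, comp_apply, hT, wordComp_apply_of_eq_add T a u hT, map_add, map_sum,
      Fin.sum_univ_succ, iterate_succ_apply']
    simp only [← iterate_succ_apply' a, Fin.val_succ, Fin.val_zero, iterate_zero, id]
    abel

/-- The expansion of the word `j` in base `f` with digits `z`; as `i.rev = n - 1 - i`, the digit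
`z (j 0)` is the most significant one. -/
def radixSum [AddCommMonoid M] (f : M → M) (z : ι → M) {n : ℕ} (j : Fin n → ι) : M :=
  ∑ i, f^[i.rev] (z (j i))

variable [AddCommGroup M] {f : F} {L : AddSubgroup M} {z : ι → M}

theorem radixSum_mem (hL : ∀ x ∈ L, f x ∈ L) (hz : ∀ j, z j ∈ L) {n : ℕ} (j : Fin n → ι) :
    radixSum f z j ∈ L := by
  refine L.sum_mem fun i _ => ?_
  induction (i.rev : ℕ) with
  | zero => exact hz (j i)
  | succ k ih => rw [iterate_succ_apply']; exact hL _ ih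

theorem radixSum_injective [AddMonoidHomClass F M M] (hf : Injective f) (hL : ∀ x ∈ L, f x ∈ L)
    (hz : ∀ j, z j ∈ L) (hdist : ∀ j k, j ≠ k → ∀ x ∈ L, z j - z k ≠ f x) :
    ∀ n : ℕ, Injective (radixSum f z : (Fin n → ι) → M)
  | 0, j, k, _ => Subsingleton.elim j k
  | n + 1, j, k, h => by
    have split : ∀ w : Fin (n + 1) → ι,
        radixSum f z w = f (radixSum f z fun i => w i.castSucc) + z (w (Fin.last n)) := by
      intro w
      simp only [radixSum, Fin.sum_univ_castSucc, Fin.rev_castSucc, Fin.val_succ,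
        iterate_succ_apply', Fin.rev_last, Fin.val_zero, iterate_zero, id, map_sum]
    rw [split, split] at h
    have hlast : j (Fin.last n) = k (Fin.last n) := by
      by_contra hne
      refine hdist _ _ hne ((radixSum f z fun i => k i.castSucc) - radixSum f z fun i => j i.castSucc)
        (L.sub_mem (radixSum_mem hL hz _) (radixSum_mem hL hz _)) ?_
      rw [map_sub, sub_eq_sub_iff_add_eq_add, add_comm, h]
    rw [hlast] at h
    have hinit := radixSum_injective hf hL hz hdist n (hf (add_right_cancel h))
    funext i
    cases i using Fin.lastCases with
    | last => exact hlast
    | cast i => exact congrFun hinit i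

end Digits

def integerLattice (n : Type*) : AddSubgroup (EuclideanSpace ℝ n) where
  carrier := {x | ∃ v : n → ℤ, x = (WithLp.equiv 2 (n → ℝ)).symm fun i => (v i : ℝ)}
  zero_mem' := ⟨0, by ext; simp⟩
  add_mem' := by
    rintro _ _ ⟨v, rfl⟩ ⟨w, rfl⟩
    exact ⟨v + w, by ext; simp⟩
  neg_mem' := by
    rintro _ ⟨v, rfl⟩
    exact ⟨-v, by ext; simp⟩

namespace Matrix

variable {n : Type*} [Fintype n] [DecidableEq n]

theorem det_ne_zero_of_not_isRoot_charpoly_zero {R : Type*} [CommRing R] {A : Matrix n n R}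
    (h : ¬ A.charpoly.IsRoot 0) : A.det ≠ 0 := by
  rwa [det_eq_sign_charpoly_coeff, Polynomial.coeff_zero_eq_eval_zero, Ne,
    ((isUnit_neg_one (α := R)).pow _).mul_right_eq_zero]

theorem toEuclideanLin_mul_apply (A B : Matrix n n ℝ) (x : EuclideanSpace ℝ n) :
    toEuclideanLin (A * B) x = toEuclideanLin A (toEuclideanLin B x) := by
  simp only [← coe_toEuclideanCLM_eq_toEuclideanLin, map_mul]
  rfl

theorem iterate_toEuclideanLin (A : Matrix n n ℝ) (k : ℕ) :
    (toEuclideanLin A)^[k] = toEuclideanLin (A ^ k) := by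
  funext x
  rw [← coe_toEuclideanCLM_eq_toEuclideanLin, ← coe_toEuclideanCLM_eq_toEuclideanLin, map_pow,
    ContinuousLinearMap.toLinearMap_pow, Module.End.pow_apply]

theorem toEuclideanLin_injective {A : Matrix n n ℝ} (hA : IsUnit A.det) :
    Injective (toEuclideanLin A) :=
  LeftInverse.injective (g := toEuclideanLin A⁻¹) fun x => by
    simp [← toEuclideanLin_mul_apply, nonsing_inv_mul A hA]

theorem toEuclideanLin_mul_sum_eq_radixSum {A : Matrix n n ℝ} (hA : IsUnit A.det) (m₀ : ℤ)
    {ι : Type*} (u : ι → EuclideanSpace ℝ n) {m : ℕ} (w : Fin (m + 1) → ι) :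
    toEuclideanLin (A ^ m * A ^ m₀) (∑ i : Fin (m + 1), (toEuclideanLin A⁻¹)^[i] (u (w i)))
      = radixSum (toEuclideanLin A) (fun j => toEuclideanLin (A ^ m₀) (u j)) w := by
  rw [map_sum]
  refine Finset.sum_congr rfl fun i _ => ?_
  have hi : (i : ℕ) ≤ m := Fin.is_le i
  have hrev : (i.rev : ℕ) = m - i := by rw [Fin.val_rev]; omega
  have hcomm : A ^ m₀ * (A ^ (i : ℕ))⁻¹ = (A ^ (i : ℕ))⁻¹ * A ^ m₀ := by
    rw [← zpow_neg_natCast]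
    exact (Commute.zpow_zpow_self A _ _).eq
  rw [iterate_toEuclideanLin, iterate_toEuclideanLin, ← toEuclideanLin_mul_apply,
    ← toEuclideanLin_mul_apply, hrev, pow_sub' A hA hi, inv_pow', mul_assoc, hcomm, mul_assoc]

theorem toEuclideanLin_mem_integerLattice {A : Matrix n n ℝ}
    (hA : ∀ i j, ∃ z : ℤ, A i j = z) {x : EuclideanSpace ℝ n} (hx : x ∈ integerLattice n) :
    toEuclideanLin A x ∈ integerLattice n := by
  choose Az hAz using hA
  obtain ⟨v, rfl⟩ := hx
  refine ⟨of Az *ᵥ v, ?_⟩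
  ext i
  simp [mulVec, dotProduct, hAz]

end Matrix

open Matrix in
theorem stmt5_general (d : ℕ) (A : Matrix (Fin d) (Fin d) ℝ)
    (hAint : ∀ i j, ∃ z : ℤ, A i j = z)
    (hAeig : ∀ z : ℂ, (Matrix.charpoly (A.map ((↑) : ℝ → ℂ))).IsRoot z → 1 < ‖z‖)
    (N : ℕ)
    (u : Fin N → EuclideanSpace ℝ (Fin d))
    (T : Fin N → EuclideanSpace ℝ (Fin d) → EuclideanSpace ℝ (Fin d))
    (hT : ∀ j x, T j x = Matrix.toEuclideanLin A⁻¹ x + u j)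
    (m₀ : ℤ)
    (hint : ∀ j, ∃ v : Fin d → ℤ,
      Matrix.toEuclideanLin (A ^ m₀) (u j)
        = (WithLp.equiv 2 (Fin d → ℝ)).symm fun i => (v i : ℝ))
    (hdistinct : ∀ j k, j ≠ k →
      ¬ ∃ v : Fin d → ℤ,
        Matrix.toEuclideanLin (A ^ m₀) (u j) - Matrix.toEuclideanLin (A ^ m₀) (u k)
          = Matrix.toEuclideanLin A ((WithLp.equiv 2 (Fin d → ℝ)).symm fun i => (v i : ℝ))) :
    ¬ HasExactOverlaps T := by
  rintro ⟨n, j, k, hn, hjk, heq⟩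
  obtain ⟨m, rfl⟩ : ∃ m, n = m + 1 := ⟨n - 1, by omega⟩
  have hdet : IsUnit A.det := by
    have hdetℂ : (A.map Complex.ofReal).det ≠ 0 :=
      det_ne_zero_of_not_isRoot_charpoly_zero fun h => absurd (hAeig 0 h) (by norm_num)
    rw [show (A.map Complex.ofReal).det = A.det from (Complex.ofRealHom.map_det A).symm] at hdetℂ
    exact isUnit_iff_ne_zero.mpr (Complex.ofReal_ne_zero.mp hdetℂ)
  have hsum : ∑ i : Fin (m + 1), (toEuclideanLin A⁻¹)^[i] (u (j i))
      = ∑ i : Fin (m + 1), (toEuclideanLin A⁻¹)^[i] (u (k i)) := by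
    simpa [wordComp_apply_of_eq_add T _ u hT] using congrFun heq 0
  have hradix := congrArg (toEuclideanLin (A ^ m * A ^ m₀)) hsum
  rw [toEuclideanLin_mul_sum_eq_radixSum hdet, toEuclideanLin_mul_sum_eq_radixSum hdet] at hradix
  refine hjk (radixSum_injective (toEuclideanLin_injective hdet)
    (fun _ => toEuclideanLin_mem_integerLattice hAint) hint ?_ _ hradix)
  rintro a b hab _ ⟨v, rfl⟩ h
  exact hdistinct a b hab ⟨v, h⟩

theorem stmt5 (d : ℕ) (hd : 0 < d) (A : Matrix (Fin d) (Fin d) ℝ)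
    (hAint : ∀ i j, ∃ z : ℤ, A i j = z)
    (hAeig : ∀ z : ℂ, (Matrix.charpoly (A.map ((↑) : ℝ → ℂ))).IsRoot z → 1 < ‖z‖)
    (N : ℕ) (hN : (N : ℝ) = |A.det|)
    (u : Fin N → EuclideanSpace ℝ (Fin d)) (hu : ∀ j, u j ∈ lam A)
    (T : Fin N → EuclideanSpace ℝ (Fin d) → EuclideanSpace ℝ (Fin d))
    (hT : ∀ j x, T j x = Matrix.toEuclideanLin A⁻¹ x + u j)
    (m₀ : ℤ)
    (hint : ∀ j, ∃ v : Fin d → ℤ,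
      Matrix.toEuclideanLin (A ^ m₀) (u j)
        = (WithLp.equiv 2 (Fin d → ℝ)).symm fun i => (v i : ℝ))
    (hdistinct : ∀ j k, j ≠ k →
      ¬ ∃ v : Fin d → ℤ,
        Matrix.toEuclideanLin (A ^ m₀) (u j) - Matrix.toEuclideanLin (A ^ m₀) (u k)
          = Matrix.toEuclideanLin A ((WithLp.equiv 2 (Fin d → ℝ)).symm fun i => (v i : ℝ))) :
    ¬ HasExactOverlaps T :=
  stmt5_general d A hAint hAeig N u T hT m₀ hint hdistinct
end
end

section
/- Let w ∈ ℤ^d be nonzero and suppose (u_1,…,u_N) ∈ 𝒱_w, i.e. u_1,…,u_N ∈ Λ and ∑_{j=1}^N e^{2πi⟨Aⁿu_j, w⟩} ≠ 0 for every integer n ∈ ℤ. Set a_n := (1/N) ∑_{j=1}^N e^{2πi⟨A^{-n}u_j, w⟩} for n ∈ ℤ. Then ∑_{n∈ℤ} |a_n − 1| < ∞, every a_n is nonzero, and the doubly infinite product ∏_{n∈ℤ} a_n converges to a nonzero complex number. -/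
open MeasureTheory Filter Topology ENNReal

noncomputable section

/-!
For `n ≥ 0` the matrix `A^{-n} = (A⁻¹)^n` contracts: every eigenvalue of `A⁻¹` lies in the open
unit disc, so by Gelfand's formula the entries of `(A⁻¹)^n` are summable, and
`|a_n - 1| ≤ (2π / N) ∑_j |⟨A^{-n} u_j, w⟩|` is summable over `n ≥ 0`. For `n ≥ 0` large,
`A^n u_j = A^(n - m) v` with `v ∈ ℤ^d`, so every `⟨A^n u_j, w⟩` is an integer and `a_{-n} = 1`.
Absolute summability of `a_n - 1` together with `a_n ≠ 0` makes `∑ log a_n` converge, and the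
product is its exponential.
-/

lemma exists_hasProd_ne_zero_of_summable_norm_sub_one {ι : Type*} {f : ι → ℂ}
    (hf : Summable fun i => ‖f i - 1‖) (hf0 : ∀ i, f i ≠ 0) : ∃ P, P ≠ 0 ∧ HasProd f P := by
  obtain ⟨L, hL⟩ := Complex.summable_log_one_add_of_summable hf.of_norm
  simp only [add_sub_cancel] at hL
  exact ⟨Complex.exp L, Complex.exp_ne_zero L, Complex.hasProd_of_hasSum_log hf0 hL⟩

lemma summable_norm_pow_of_spectralRadius_lt_one {𝔸 : Type*} [NormedRing 𝔸] [NormedAlgebra ℂ 𝔸]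
    [CompleteSpace 𝔸] (a : 𝔸) (ha : spectralRadius ℂ a < 1) : Summable fun n => ‖a ^ n‖ := by
  obtain ⟨r, hr, hr1⟩ := ENNReal.lt_iff_exists_nnreal_btwn.mp ha
  have hroot : ∀ᶠ n : ℕ in atTop, (‖a ^ n‖₊ : ℝ≥0∞) ^ (1 / (n : ℝ)) < r :=
    (spectrum.pow_nnnorm_pow_one_div_tendsto_nhds_spectralRadius a).eventually_lt_const hr
  refine (summable_geometric_of_lt_one r.coe_nonneg (by exact_mod_cast hr1))
    |>.of_norm_bounded_eventually_nat ?_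
  filter_upwards [hroot, eventually_ne_atTop 0] with n hn hn0
  have := ENNReal.rpow_lt_rpow hn (by positivity : (0 : ℝ) < n)
  rw [← ENNReal.rpow_mul, one_div_mul_cancel (by exact_mod_cast hn0), ENNReal.rpow_one,
    ENNReal.rpow_natCast, ← ENNReal.coe_pow, ENNReal.coe_lt_coe] at this
  rw [Real.norm_of_nonneg (norm_nonneg _)]
  exact_mod_cast this.le

def expMean {N : ℕ} (θ : Fin N → ℝ) : ℂ :=
  (N : ℂ)⁻¹ * ∑ j, Complex.exp (((2 * Real.pi * θ j : ℝ) : ℂ) * Complex.I)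

lemma expMean_eq_one {N : ℕ} (hN : N ≠ 0) {θ : Fin N → ℝ} (hθ : ∀ j, ∃ k : ℤ, θ j = k) :
    expMean θ = 1 := by
  have hterm : ∀ j, Complex.exp (((2 * Real.pi * θ j : ℝ) : ℂ) * Complex.I) = 1 := fun j => by
    obtain ⟨k, hk⟩ := hθ j
    rw [hk, ← Complex.exp_int_mul_two_pi_mul_I k]
    push_cast
    ring_nf
  rw [expMean, Finset.sum_congr rfl fun j _ => hterm j]
  simp [hN]

lemma norm_expMean_sub_one_le {N : ℕ} (hN : N ≠ 0) (θ : Fin N → ℝ) :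
    ‖expMean θ - 1‖ ≤ (N : ℝ)⁻¹ * ∑ j, 2 * Real.pi * |θ j| := by
  have hmean : expMean θ - 1 =
      (N : ℂ)⁻¹ * ∑ j, (Complex.exp (((2 * Real.pi * θ j : ℝ) : ℂ) * Complex.I) - 1) := by
    simp [expMean, Finset.sum_sub_distrib, mul_sub, hN]
  rw [hmean, norm_mul, norm_inv, Complex.norm_natCast]
  gcongr
  refine (norm_sum_le _ _).trans (Finset.sum_le_sum fun j _ => ?_)
  rw [mul_comm _ Complex.I]
  refine Real.norm_exp_I_mul_ofReal_sub_one_le.trans_eq ?_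
  rw [Real.norm_eq_abs, abs_mul, abs_of_pos Real.two_pi_pos]

namespace Matrix

variable {ι : Type*} [Fintype ι] [DecidableEq ι]

lemma summable_pow_of_forall_mem_spectrum_norm_lt_one (M : Matrix ι ι ℂ)
    (hM : ∀ μ ∈ spectrum ℂ M, ‖μ‖ < 1) : Summable fun n => M ^ n := by
  let _ : NormedRing (Matrix ι ι ℂ) := Matrix.linftyOpNormedRing
  let _ : NormedAlgebra ℂ (Matrix ι ι ℂ) := Matrix.linftyOpNormedAlgebra
  refine Summable.of_norm (summable_norm_pow_of_spectralRadius_lt_one M ?_)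
  rcases (spectrum ℂ M).eq_empty_or_nonempty with h | h
  · simp [spectralRadius, h]
  · exact_mod_cast spectrum.spectralRadius_lt_of_forall_lt_of_nonempty h
      (r := 1) fun μ hμ => by exact_mod_cast hM μ hμ

lemma summable_pow_apply_of_forall_mem_spectrum_map_norm_lt_one (B : Matrix ι ι ℝ)
    (hB : ∀ μ ∈ spectrum ℂ (B.map ((↑) : ℝ → ℂ)), ‖μ‖ < 1) (i j : ι) :
    Summable fun n => (B ^ n) i j := by
  have h := Pi.summable.mp
    (Pi.summable.mp (summable_pow_of_forall_mem_spectrum_norm_lt_one _ hB) i) j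
  refine Complex.summable_ofReal.mp (h.congr fun n => ?_)
  exact congrFun (congrFun (B.map_pow Complex.ofRealHom n) i) j |>.symm

lemma inner_toEuclideanLin (P : Matrix ι ι ℝ) (x y : EuclideanSpace ℝ ι) :
    inner ℝ (toEuclideanLin P x) y = ∑ i, ∑ j, y i * (P i j * x j) := by
  simp [PiLp.inner_apply, mulVec, dotProduct, Finset.mul_sum]

lemma summable_inner_toEuclideanLin {β : Type*} {P : β → Matrix ι ι ℝ}
    (hP : ∀ i j, Summable fun n => P n i j) (x y : EuclideanSpace ℝ ι) :
    Summable fun n => inner ℝ (toEuclideanLin (P n) x) y := by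
  simp only [inner_toEuclideanLin]
  exact summable_sum fun i _ => summable_sum fun j _ => ((hP i j).mul_right _).mul_left _

lemma exists_int_pow_apply {A : Matrix ι ι ℝ} (hA : ∀ i j, ∃ z : ℤ, A i j = z) (k : ℕ)
    (i j : ι) : ∃ z : ℤ, (A ^ k) i j = z := by
  choose A' hA' using hA
  have hmap : A = (of A').map (Int.castRingHom ℝ) := by ext; simp [hA']
  exact ⟨(of A' ^ k) i j, by rw [hmap, ← Matrix.map_pow]; rfl⟩

lemma exists_int_inner_toEuclideanLin {P : Matrix ι ι ℝ} (hP : ∀ i j, ∃ z : ℤ, P i j = z)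
    {x y : EuclideanSpace ℝ ι} (hx : ∀ i, ∃ z : ℤ, x i = z) (hy : ∀ i, ∃ z : ℤ, y i = z) :
    ∃ k : ℤ, inner ℝ (toEuclideanLin P x) y = k := by
  choose P' hP' using hP
  choose x' hx' using hx
  choose y' hy' using hy
  exact ⟨∑ i, ∑ j, y' i * (P' i j * x' j), by simp [inner_toEuclideanLin, hP', hx', hy']⟩

def IsExpanding (A : Matrix ι ι ℝ) : Prop :=
  ∀ z : ℂ, (A.map ((↑) : ℝ → ℂ)).charpoly.IsRoot z → 1 < ‖z‖

lemma IsExpanding.isUnit_det {A : Matrix ι ι ℝ} (hA : A.IsExpanding) : IsUnit A.det := by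
  have h0 : (0 : ℂ) ∉ spectrum ℂ (A.map ((↑) : ℝ → ℂ)) := fun h =>
    absurd (hA 0 (mem_spectrum_iff_isRoot_charpoly.mp h)) (by simp)
  rw [spectrum.zero_notMem_iff, isUnit_iff_isUnit_det, isUnit_iff_ne_zero] at h0
  rw [isUnit_iff_ne_zero]
  rintro hdet
  have := Complex.ofRealHom.map_det A
  rw [hdet, map_zero] at this
  exact h0 this.symm

lemma IsExpanding.norm_lt_one_of_mem_spectrum_inv {A : Matrix ι ι ℝ} (hA : A.IsExpanding)
    {μ : ℂ} (hμ : μ ∈ spectrum ℂ (A⁻¹.map ((↑) : ℝ → ℂ))) : ‖μ‖ < 1 := by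
  let U := Units.map (Complex.ofRealHom.mapMatrix : Matrix ι ι ℝ →+* Matrix ι ι ℂ).toMonoidHom
    (A.nonsingInvUnit hA.isUnit_det)
  have hμ' : μ⁻¹ ∈ spectrum ℂ (U : Matrix ι ι ℂ) := spectrum.inv₀_mem_iff.mpr hμ
  have := hA _ (mem_spectrum_iff_isRoot_charpoly.mp hμ')
  rw [norm_inv, one_lt_inv_iff₀] at this
  exact this.2

lemma IsExpanding.summable_inv_pow_apply {A : Matrix ι ι ℝ} (hA : A.IsExpanding) (i j : ι) :
    Summable fun n => (A⁻¹ ^ n) i j :=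
  summable_pow_apply_of_forall_mem_spectrum_map_norm_lt_one _
    (fun _ => hA.norm_lt_one_of_mem_spectrum_inv) i j

end Matrix

lemma eventually_exists_int_inner_toEuclideanLin_pow {d : ℕ} {A : Matrix (Fin d) (Fin d) ℝ}
    (hAint : ∀ i j, ∃ z : ℤ, A i j = z) (hA : IsUnit A.det) {u : EuclideanSpace ℝ (Fin d)}
    (hu : u ∈ lam A) {y : EuclideanSpace ℝ (Fin d)} (hy : ∀ i, ∃ z : ℤ, y i = z) :
    ∀ᶠ n : ℕ in atTop, ∃ k : ℤ, inner ℝ (Matrix.toEuclideanLin (A ^ n) u) y = k := by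
  obtain ⟨m, v, rfl⟩ := hu
  filter_upwards [eventually_ge_atTop m] with n hn
  rw [← LinearMap.comp_apply, ← Matrix.toLpLin_mul_same, Matrix.inv_pow',
    ← Matrix.pow_sub' A hA hn]
  exact Matrix.exists_int_inner_toEuclideanLin (Matrix.exists_int_pow_apply hAint _)
    (fun i => ⟨v i, rfl⟩) hy

theorem stmt14_general (d : ℕ) (A : Matrix (Fin d) (Fin d) ℝ)
    (hAint : ∀ i j, ∃ z : ℤ, A i j = z)
    (hAeig : ∀ z : ℂ, (Matrix.charpoly (A.map ((↑) : ℝ → ℂ))).IsRoot z → 1 < ‖z‖)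
    (N : ℕ) (hN : (N : ℝ) = |A.det|)
    (w : Fin d → ℤ)
    (u : Fin N → EuclideanSpace ℝ (Fin d)) (hu : ∀ j, u j ∈ lam A)
    (hV : ∀ n : ℤ,
      (∑ j, Complex.exp ((2 * Real.pi *
        (inner ℝ (Matrix.toEuclideanLin (A ^ n) (u j))
          ((WithLp.equiv 2 (Fin d → ℝ)).symm fun i => (w i : ℝ)) : ℝ) : ℝ) * Complex.I))
        ≠ 0)
    (a : ℤ → ℂ)
    (ha : ∀ n : ℤ, a n = (N : ℂ)⁻¹ *
      ∑ j, Complex.exp ((2 * Real.pi *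
        (inner ℝ (Matrix.toEuclideanLin (A ^ (-n)) (u j))
          ((WithLp.equiv 2 (Fin d → ℝ)).symm fun i => (w i : ℝ)) : ℝ) : ℝ) * Complex.I)) :
    Summable (fun n : ℤ => ‖a n - 1‖) ∧ (∀ n, a n ≠ 0) ∧
      ∃ P : ℂ, P ≠ 0 ∧ HasProd a P := by
  have hA : A.IsExpanding := hAeig
  have hN0 : N ≠ 0 := by
    rintro rfl
    exact hA.isUnit_det.ne_zero (abs_eq_zero.mp (by exact_mod_cast hN.symm))
  have ha0 : ∀ n, a n ≠ 0 := fun n => by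
    rw [ha]
    exact mul_ne_zero (inv_ne_zero (Nat.cast_ne_zero.mpr hN0)) (hV (-n))
  set y : EuclideanSpace ℝ (Fin d) := (WithLp.equiv 2 (Fin d → ℝ)).symm fun i => (w i : ℝ)
  have hmean : ∀ n, a n = expMean fun j => inner ℝ (Matrix.toEuclideanLin (A ^ (-n)) (u j)) y := ha
  have hpos : Summable fun n : ℕ => ‖a n - 1‖ := by
    have hθ := fun j => (Matrix.summable_inner_toEuclideanLin hA.summable_inv_pow_apply (u j) y).abs
    refine Summable.of_nonneg_of_le (fun _ => norm_nonneg _) (fun n => ?_)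
      ((summable_sum fun j (_ : j ∈ Finset.univ) => (hθ j).mul_left (2 * Real.pi)).mul_left
        (N : ℝ)⁻¹)
    rw [hmean, Matrix.zpow_neg_natCast, ← Matrix.inv_pow']
    exact norm_expMean_sub_one_le hN0 _
  have hneg : Summable fun n : ℕ => ‖a (-n) - 1‖ := by
    have hint := eventually_all.mpr fun j => eventually_exists_int_inner_toEuclideanLin_pow
      hAint hA.isUnit_det (hu j) (y := y) fun i => ⟨w i, rfl⟩
    refine summable_zero.of_norm_bounded_eventually_nat ?_
    filter_upwards [hint] with n hn
    rw [hmean, neg_neg, zpow_natCast, expMean_eq_one hN0 hn, sub_self, norm_zero, norm_zero]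
  have hsum : Summable fun n : ℤ => ‖a n - 1‖ := .of_nat_of_neg hpos hneg
  exact ⟨hsum, ha0, exists_hasProd_ne_zero_of_summable_norm_sub_one hsum ha0⟩

theorem stmt14 (d : ℕ) (hd : 0 < d) (A : Matrix (Fin d) (Fin d) ℝ)
    (hAint : ∀ i j, ∃ z : ℤ, A i j = z)
    (hAeig : ∀ z : ℂ, (Matrix.charpoly (A.map ((↑) : ℝ → ℂ))).IsRoot z → 1 < ‖z‖)
    (N : ℕ) (hN : (N : ℝ) = |A.det|) (hN2 : 2 < N)
    (w : Fin d → ℤ) (hw : w ≠ 0)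
    (u : Fin N → EuclideanSpace ℝ (Fin d)) (hu : ∀ j, u j ∈ lam A)
    (hV : ∀ n : ℤ,
      (∑ j, Complex.exp ((2 * Real.pi *
        (inner ℝ (Matrix.toEuclideanLin (A ^ n) (u j))
          ((WithLp.equiv 2 (Fin d → ℝ)).symm fun i => (w i : ℝ)) : ℝ) : ℝ) * Complex.I))
        ≠ 0)
    (a : ℤ → ℂ)
    (ha : ∀ n : ℤ, a n = (N : ℂ)⁻¹ *
      ∑ j, Complex.exp ((2 * Real.pi *
        (inner ℝ (Matrix.toEuclideanLin (A ^ (-n)) (u j))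
          ((WithLp.equiv 2 (Fin d → ℝ)).symm fun i => (w i : ℝ)) : ℝ) : ℝ) * Complex.I)) :
    Summable (fun n : ℤ => ‖a n - 1‖) ∧ (∀ n, a n ≠ 0) ∧
      ∃ P : ℂ, P ≠ 0 ∧ HasProd a P :=
  stmt14_general d A hAint hAeig N hN w u hu hV a ha
end
end

section
/- Let w ∈ ℤ^d be nonzero and let u_1,…,u_{N-1} ∈ Λ. Then the set of integers n ∈ ℤ for which |∑_{j=1}^{N-1} e^{2πi⟨Aⁿu_j, w⟩}| = 1 is finite. -/
open MeasureTheory Filter Topology ENNReal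

noncomputable section

/-! If every `u j` lies in `A⁻ᵐ ℤ^d`, then for `n ≥ m` the vectors `Aⁿ u j` lie in `ℤ^d`, so every
phase `⟨Aⁿ u j, w⟩` is an integer and the sum equals `N - 1 ≠ 1`. As `n → -∞`, `Aⁿ → 0` because the
eigenvalues of `A⁻¹` lie in the open unit disc (Gelfand's formula), so the sum tends to `N - 1`.
Hence the set is bounded on both sides. -/

open Matrix Complex

theorem spectrum.tendsto_pow_atTop_nhds_zero_of_spectralRadius_lt_one {A : Type*} [NormedRing A]
    [NormedAlgebra ℂ A] [CompleteSpace A] {a : A} (ha : spectralRadius ℂ a < 1) :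
    Tendsto (fun n : ℕ => a ^ n) atTop (𝓝 0) := by
  obtain ⟨c, hρc, hc1⟩ := ENNReal.lt_iff_exists_nnreal_btwn.1 ha
  have hle : ∀ᶠ n : ℕ in atTop, ‖a ^ n‖ ≤ (c : ℝ) ^ n := by
    filter_upwards [(pow_nnnorm_pow_one_div_tendsto_nhds_spectralRadius a).eventually_lt_const
      hρc, eventually_gt_atTop 0] with n hn hn0
    rw [one_div, ENNReal.rpow_inv_lt_iff (by positivity), ENNReal.rpow_natCast] at hn
    exact_mod_cast hn.le
  refine squeeze_zero_norm' hle (tendsto_pow_atTop_nhds_zero_of_lt_one c.2 ?_)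
  exact_mod_cast hc1

namespace Matrix

variable {ι : Type*} [Fintype ι] [DecidableEq ι]

theorem map_inv {K L : Type*} [Field K] [Field L] (f : K →+* L) (A : Matrix ι ι K) :
    A⁻¹.map f = (A.map f)⁻¹ := by
  rw [inv_def, inv_def, Ring.inverse_eq_inv', Ring.inverse_eq_inv']
  change f.mapMatrix _ = (f.mapMatrix A).det⁻¹ • (f.mapMatrix A).adjugate
  rw [← RingHom.map_det, ← RingHom.map_adjugate, ← map_inv₀]
  ext; simp

theorem isUnit_of_not_isRoot_charpoly_zero {K : Type*} [Field K] {M : Matrix ι ι K}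
    (h : ¬M.charpoly.IsRoot 0) : IsUnit M :=
  spectrum.isUnit_of_zero_notMem K fun h0 => h (mem_spectrum_iff_isRoot_charpoly.1 h0)

theorem norm_lt_one_of_isRoot_charpoly_inv {K : Type*} [NormedField K] {M : Matrix ι ι K}
    (h : ∀ z, M.charpoly.IsRoot z → 1 < ‖z‖) {z : K} (hz : M⁻¹.charpoly.IsRoot z) : ‖z‖ < 1 := by
  have hM : IsUnit M := isUnit_of_not_isRoot_charpoly_zero fun h0 => (h 0 h0).not_ge (by simp)
  rw [← mem_spectrum_iff_isRoot_charpoly, ← hM.unit_spec, ← coe_units_inv, ← spectrum.map_inv,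
    Set.mem_inv, mem_spectrum_iff_isRoot_charpoly] at hz
  simpa using (one_lt_inv_iff₀.1 (norm_inv z ▸ h _ hz)).2

section LinftyOpNorm

attribute [local instance] Matrix.linftyOpNormedRing Matrix.linftyOpNormedAlgebra

theorem tendsto_pow_atTop_nhds_zero_of_forall_isRoot_charpoly (M : Matrix ι ι ℂ)
    (h : ∀ z, M.charpoly.IsRoot z → ‖z‖ < 1) : Tendsto (fun k : ℕ => M ^ k) atTop (𝓝 0) := by
  rcases subsingleton_or_nontrivial (Matrix ι ι ℂ) with hs | hs
  · simpa only [Subsingleton.elim _ (0 : Matrix ι ι ℂ)] using tendsto_const_nhds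
  refine spectrum.tendsto_pow_atTop_nhds_zero_of_spectralRadius_lt_one ?_
  simpa using spectrum.spectralRadius_lt_of_forall_lt (r := 1) M fun z hz => by
    exact_mod_cast h z (mem_spectrum_iff_isRoot_charpoly.1 hz)

end LinftyOpNorm

theorem tendsto_inv_pow_atTop_nhds_zero {A : Matrix ι ι ℝ}
    (h : ∀ z : ℂ, (A.map (↑)).charpoly.IsRoot z → 1 < ‖z‖) :
    Tendsto (fun k : ℕ => A⁻¹ ^ k) atTop (𝓝 0) := by
  have hpow (k : ℕ) : (A.map ((↑) : ℝ → ℂ))⁻¹ ^ k = (A⁻¹ ^ k).map (↑) := by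
    change (ofRealHom.mapMatrix A)⁻¹ ^ k = ofRealHom.mapMatrix (A⁻¹ ^ k)
    rw [map_pow]
    exact congrArg (· ^ k) (map_inv ofRealHom A).symm
  have hre : Continuous fun M : Matrix ι ι ℂ => M.map re := continuous_id.matrix_map continuous_re
  simpa [Function.comp_def, hpow] using (hre.tendsto 0).comp
    (tendsto_pow_atTop_nhds_zero_of_forall_isRoot_charpoly _ fun z =>
      norm_lt_one_of_isRoot_charpoly_inv h)

theorem tendsto_zpow_atBot_nhds_zero {R : Type*} [CommRing R] [TopologicalSpace R]
    {A : Matrix ι ι R} (hA : Tendsto (fun k : ℕ => A⁻¹ ^ k) atTop (𝓝 0)) :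
    Tendsto (fun n : ℤ => A ^ n) atBot (𝓝 0) := by
  have hneg : Tendsto (fun n : ℤ => (-n).toNat) atBot atTop :=
    tendsto_atBot_atTop.2 fun k => ⟨-k, fun n hn => by omega⟩
  refine Tendsto.congr' ?_ (hA.comp hneg)
  filter_upwards [eventually_le_atBot 0] with n hn
  rw [Function.comp_apply, inv_pow', ← zpow_neg_natCast, Int.toNat_of_nonneg (by omega), neg_neg]

theorem inner_toEuclideanLin_map_intCast (B : Matrix ι ι ℤ) (v w : ι → ℤ) :
    inner ℝ (toEuclideanLin (B.map (↑)) (WithLp.toLp 2 fun i => (v i : ℝ)))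
      (WithLp.toLp 2 fun i => (w i : ℝ)) = ((w ⬝ᵥ (B *ᵥ v) : ℤ) : ℝ) := by
  have hmv : B.map ((↑) : ℤ → ℝ) *ᵥ (fun i => (v i : ℝ)) = fun i => ((B *ᵥ v) i : ℝ) :=
    funext fun i => ((Int.castRingHom ℝ).map_mulVec B v i).symm
  rw [toLpLin_toLp, toLin'_apply, hmv, EuclideanSpace.inner_toLp_toLp, star_trivial]
  exact ((Int.castRingHom ℝ).map_dotProduct w (B *ᵥ v)).symm

theorem tendsto_inner_toEuclideanLin_nhds_zero {α : Type*} {l : Filter α} {F : α → Matrix ι ι ℝ}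
    (hF : Tendsto F l (𝓝 0)) (x y : EuclideanSpace ℝ ι) :
    Tendsto (fun a => inner ℝ (toEuclideanLin (F a) x) y) l (𝓝 0) := by
  have hcont : Continuous fun M : Matrix ι ι ℝ => inner ℝ (toEuclideanLin M x) y := by
    simp only [toLpLin_apply]
    fun_prop
  simpa [Function.comp_def] using (hcont.tendsto 0).comp hF

end Matrix

variable {ι : Type*} [Fintype ι]

theorem norm_sum_exp_eq_card_of_forall_int {θ : ι → ℝ} (hθ : ∀ j, ∃ z : ℤ, θ j = z) :
    ‖∑ j, exp (↑(2 * Real.pi * θ j) * I)‖ = Fintype.card ι := by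
  have hone : ∀ j, exp (↑(2 * Real.pi * θ j) * I) = 1 := fun j => by
    obtain ⟨z, hz⟩ := hθ j
    rw [hz, show (↑(2 * Real.pi * z) * I : ℂ) = z * (2 * Real.pi * I) by push_cast; ring,
      exp_int_mul_two_pi_mul_I]
  rw [Finset.sum_congr rfl fun j _ => hone j]
  simp

theorem tendsto_norm_sum_exp_nhds_card {α : Type*} {l : Filter α} {θ : α → ι → ℝ}
    (hθ : ∀ j, Tendsto (θ · j) l (𝓝 0)) :
    Tendsto (fun a => ‖∑ j, exp (↑(2 * Real.pi * θ a j) * I)‖) l (𝓝 (Fintype.card ι)) := by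
  have hcont : Continuous fun t : ι → ℝ => ‖∑ j, exp (↑(2 * Real.pi * t j) * I)‖ := by fun_prop
  simpa [Function.comp_def] using (hcont.tendsto 0).comp (tendsto_pi_nhds.2 hθ)

theorem eventually_exists_int_inner_toEuclideanLin_zpow {d : ℕ} {A : Matrix (Fin d) (Fin d) ℝ}
    (hAint : ∀ i j, ∃ z : ℤ, A i j = z) (hA : IsUnit A.det) {x : EuclideanSpace ℝ (Fin d)}
    (hx : x ∈ lam A) (w : Fin d → ℤ) :
    ∀ᶠ n : ℤ in atTop, ∃ z : ℤ,
      inner ℝ (toEuclideanLin (A ^ n) x) (WithLp.toLp 2 fun i => (w i : ℝ)) = z := by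
  choose B hB using hAint
  have hpow (p : ℕ) : A ^ p = (of B ^ p).map (↑) := by
    rw [show A = (of B).map (↑) from ext hB]
    exact (map_pow (Int.castRingHom ℝ).mapMatrix _ p).symm
  obtain ⟨m, v, rfl⟩ := hx
  filter_upwards [eventually_ge_atTop (m : ℤ)] with n hn
  obtain ⟨p, rfl⟩ : ∃ p : ℕ, n = p + m := ⟨(n - m).toNat, by omega⟩
  have hshift : A ^ ((p : ℤ) + m) * A⁻¹ ^ m = A ^ p := by
    rw [zpow_add hA, zpow_natCast, zpow_natCast, mul_assoc, inv_pow',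
      mul_nonsing_inv _ (by simpa [det_pow] using hA.pow m), mul_one]
  refine ⟨w ⬝ᵥ (of B ^ p *ᵥ v), ?_⟩
  rw [← LinearMap.comp_apply, ← toLpLin_mul_same, hshift, hpow]
  exact inner_toEuclideanLin_map_intCast _ v w

theorem stmt16_general (d : ℕ) (A : Matrix (Fin d) (Fin d) ℝ)
    (hAint : ∀ i j, ∃ z : ℤ, A i j = z)
    (hAeig : ∀ z : ℂ, (Matrix.charpoly (A.map ((↑) : ℝ → ℂ))).IsRoot z → 1 < ‖z‖)
    (N : ℕ) (hN2 : 2 < N)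
    (w : Fin d → ℤ)
    (u : Fin (N - 1) → EuclideanSpace ℝ (Fin d)) (hu : ∀ j, u j ∈ lam A) :
    {n : ℤ | ‖
      (∑ j, Complex.exp ((2 * Real.pi *
        (inner ℝ (Matrix.toEuclideanLin (A ^ n) (u j))
          ((WithLp.equiv 2 (Fin d → ℝ)).symm fun i => (w i : ℝ)) : ℝ) : ℝ) * Complex.I))‖
        = 1}.Finite := by
  have hdet : IsUnit A.det := by
    have hAc := (isUnit_iff_isUnit_det _).1 <|
      isUnit_of_not_isRoot_charpoly_zero fun h0 => (hAeig 0 h0).not_ge (by simp)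
    rw [← show ((A.det : ℝ) : ℂ) = (A.map (↑)).det from ofRealHom.map_det A, isUnit_iff_ne_zero,
      ofReal_ne_zero] at hAc
    exact hAc.isUnit
  have hcard : (Fintype.card (Fin (N - 1)) : ℝ) ≠ 1 := by
    rw [Fintype.card_fin, Nat.cast_ne_one]
    omega
  have htop := (eventually_all.2 fun j =>
    eventually_exists_int_inner_toEuclideanLin_zpow hAint hdet (hu j) w).mono fun n hn =>
      norm_sum_exp_eq_card_of_forall_int hn
  have hbot := tendsto_norm_sum_exp_nhds_card fun j => tendsto_inner_toEuclideanLin_nhds_zero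
    (tendsto_zpow_atBot_nhds_zero (tendsto_inv_pow_atTop_nhds_zero hAeig)) (u j)
      (WithLp.toLp 2 fun i => (w i : ℝ))
  have hcofinite := Int.cofinite_eq ▸ eventually_sup.2
    ⟨hbot.eventually_ne hcard, htop.mono fun n hn => hn.trans_ne hcard⟩
  exact (eventually_cofinite.1 hcofinite).subset fun n hn => not_not.2 hn

theorem stmt16 (d : ℕ) (hd : 0 < d) (A : Matrix (Fin d) (Fin d) ℝ)
    (hAint : ∀ i j, ∃ z : ℤ, A i j = z)
    (hAeig : ∀ z : ℂ, (Matrix.charpoly (A.map ((↑) : ℝ → ℂ))).IsRoot z → 1 < ‖z‖)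
    (N : ℕ) (hN : (N : ℝ) = |A.det|) (hN2 : 2 < N)
    (w : Fin d → ℤ) (hw : w ≠ 0)
    (u : Fin (N - 1) → EuclideanSpace ℝ (Fin d)) (hu : ∀ j, u j ∈ lam A) :
    {n : ℤ | ‖
      (∑ j, Complex.exp ((2 * Real.pi *
        (inner ℝ (Matrix.toEuclideanLin (A ^ n) (u j))
          ((WithLp.equiv 2 (Fin d → ℝ)).symm fun i => (w i : ℝ)) : ℝ) : ℝ) * Complex.I))‖
        = 1}.Finite :=
  stmt16_general d A hAint hAeig N hN2 w u hu
end
end
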